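/- Let L and S be independent non-negative random variables with L \in RV_{-\beta}, S \in RV_{-\beta} for \beta > 0, and suppose \bar{F}_S(x)/\bar{F}_L(x) \to k as x \to \infty for some k \ge 0. Then VaR_\alpha(L+S) \sim (1+k)^{1/\beta} VaR_\alpha(L) as \alpha \to 1. -/

import Mathlib

open MeasureTheory ProbabilityTheory Filter Topology

/-- Tail probability function of a random variable. -/
noncomputable def tail {Ω : Type*} [MeasurableSpace Ω] (P : Measure Ω) (X : Ω → ℝ) (x : ℝ) : ℝ :=
  (P {ω | x < X ω}).toReal

/-- Distribution function of a random variable. -/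
noncomputable def cdf' {Ω : Type*} [MeasurableSpace Ω] (P : Measure Ω) (X : Ω → ℝ) (x : ℝ) : ℝ :=
  (P {ω | X ω ≤ x}).toReal

/-- Value at Risk: the α-quantile. -/
noncomputable def VaR {Ω : Type*} [MeasurableSpace Ω] (P : Measure Ω) (X : Ω → ℝ) (α : ℝ) : ℝ :=
  sInf {x : ℝ | α ≤ cdf' P X x}

/-- f is regularly varying (at infinity) with index k. -/
def RegVary (f : ℝ → ℝ) (k : ℝ) : Prop :=
  ∀ t : ℝ, 0 < t → Tendsto (fun x => f (t * x) / f x) atTop (𝓝 (t ^ k))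

/-!
The tail of `L + S` is asymptotically `1 + k` times the tail of `L`: inclusion–exclusion and
independence give the lower bound, and covering `{L + S > x}` by `{L > c x} ∪ {S > c x}` and
`{L > (1 - c) x, S > (1 - c) x}` gives the upper bound `(1 + k) c ^ (-β)`, which tends to `1 + k`
as `c ↑ 1`. Quantiles invert tails: if `tail Y ∼ c · tail X` with `tail X` regularly varying of
index `-β`, then `tail Y (t x) < tail X x` for large `x` as soon as `c t ^ (-β) < 1`, hence
`VaR Y ≤ t VaR X` near `α = 1`; together with the symmetric bound, `VaR Y / VaR X → c ^ (1 / β)`.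
-/

theorem RegVary.pos_of_antitone {f : ℝ → ℝ} {ρ : ℝ} (hf : RegVary f ρ) (hmono : Antitone f)
    (hnonneg : ∀ x, 0 ≤ f x) (x : ℝ) : 0 < f x := by
  refine (hnonneg x).lt_of_ne fun hx => ?_
  -- past `x` the quotient `f (2 * y) / f y` is `0 / 0 = 0`, but it should tend to `2 ^ ρ > 0`
  have hzero : (fun y => f (2 * y) / f y) =ᶠ[atTop] fun _ => 0 := by
    filter_upwards [eventually_ge_atTop x] with y hy
    rw [le_antisymm (hx ▸ hmono hy) (hnonneg y), div_zero]
  have h := tendsto_nhds_unique ((hf 2 two_pos).congr' hzero) tendsto_const_nhds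
  exact (Real.rpow_pos_of_pos two_pos ρ).ne' h

theorem RegVary.of_tendsto_div {f g : ℝ → ℝ} {ρ c : ℝ} (hf : RegVary f ρ) (hfpos : ∀ x, 0 < f x)
    (hc : c ≠ 0) (hgf : Tendsto (fun x => g x / f x) atTop (𝓝 c)) : RegVary g ρ := by
  intro t ht
  have h := ((hgf.comp (tendsto_id.const_mul_atTop ht)).mul (hf t ht)).div hgf hc
  rw [mul_div_right_comm, div_self hc, one_mul] at h
  refine h.congr' ?_
  filter_upwards [hgf.eventually_ne hc] with x hx
  have hfx := (hfpos x).ne'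
  have hftx := (hfpos (t * x)).ne'
  have hgx : g x ≠ 0 := fun h => hx (by rw [h, zero_div])
  simp only [Pi.div_apply, Function.comp_apply, id]
  field_simp

theorem StieltjesFunction.le_apply_sInf (F : StieltjesFunction ℝ) {α : ℝ}
    (hne : {x | α ≤ F x}.Nonempty) : α ≤ F (sInf {x | α ≤ F x}) := by
  refine ge_of_tendsto ((F.right_continuous _).mono Set.Ioi_subset_Ici_self) ?_
  filter_upwards [self_mem_nhdsWithin] with x hx
  obtain ⟨y, hy, hyx⟩ := exists_lt_of_csInf_lt hne hx
  exact hy.trans (F.mono hyx.le)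

section TailAndVaR

variable {Ω : Type*} [MeasurableSpace Ω] {P : Measure Ω} [IsProbabilityMeasure P] {X Y : Ω → ℝ}

omit [IsProbabilityMeasure P] in
theorem tail_nonneg (x : ℝ) : 0 ≤ tail P X x := ENNReal.toReal_nonneg

theorem cdf'_eq_cdf_map (hX : Measurable X) : cdf' P X = cdf (P.map X) := by
  have := Measure.isProbabilityMeasure_map (μ := P) hX.aemeasurable
  ext x
  rw [cdf_eq_real, measureReal_def, Measure.map_apply hX measurableSet_Iic]
  rfl

theorem tail_eq_one_sub_cdf' (hX : Measurable X) (x : ℝ) : tail P X x = 1 - cdf' P X x := by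
  have hcompl : {ω | x < X ω} = {ω | X ω ≤ x}ᶜ := by ext; simp
  rw [tail, cdf', ← measureReal_def, ← measureReal_def, hcompl,
    measureReal_compl (measurableSet_le hX measurable_const), probReal_univ]

theorem antitone_tail : Antitone (tail P X) := fun _ _ hxy =>
  measureReal_mono fun _ h => hxy.trans_lt h

theorem tendsto_tail_atTop (hX : Measurable X) : Tendsto (tail P X) atTop (𝓝 0) := by
  have h := (tendsto_cdf_atTop (P.map X)).const_sub 1
  rw [sub_self] at h
  convert h using 1
  ext x
  rw [tail_eq_one_sub_cdf' hX, cdf'_eq_cdf_map hX]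

theorem tail_pos_of_regVary {ρ : ℝ} (hRV : RegVary (tail P X) ρ) (x : ℝ) : 0 < tail P X x :=
  hRV.pos_of_antitone antitone_tail tail_nonneg x

variable {α : ℝ}

theorem VaR_le_iff (hX : Measurable X) (hα : α ∈ Set.Ioo 0 1) {x : ℝ} :
    VaR P X α ≤ x ↔ tail P X x ≤ 1 - α := by
  have := Measure.isProbabilityMeasure_map (μ := P) hX.aemeasurable
  set F := cdf (P.map X)
  have hne : {x | α ≤ F x}.Nonempty := ((tendsto_cdf_atTop _).eventually_const_le hα.2).exists
  have hbdd : BddBelow {x | α ≤ F x} := by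
    obtain ⟨x₀, hx₀⟩ := ((tendsto_cdf_atBot _).eventually_lt_const hα.1).exists_forall_of_atBot
    exact ⟨x₀, fun y hy => le_of_not_gt fun hyx => (hy.trans_lt (hx₀ y hyx.le)).false⟩
  rw [tail_eq_one_sub_cdf' hX, VaR, cdf'_eq_cdf_map hX, sub_le_sub_iff_left]
  exact ⟨fun h => (F.le_apply_sInf hne).trans (F.mono h), fun h => csInf_le hbdd h⟩

theorem lt_VaR_of_lt_tail (hX : Measurable X) (hα : α ∈ Set.Ioo 0 1) {x : ℝ}
    (h : 1 - α < tail P X x) : x < VaR P X α :=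
  lt_of_not_ge fun h' => ((VaR_le_iff hX hα).1 h').not_gt h

theorem tendsto_VaR_atTop (hX : Measurable X) (hpos : ∀ x, 0 < tail P X x) :
    Tendsto (VaR P X) (𝓝[<] 1) atTop := by
  refine tendsto_atTop.2 fun M => ?_
  have hlt : max 0 (1 - tail P X M) < 1 := max_lt one_pos (by linarith [hpos M])
  filter_upwards [Ioo_mem_nhdsLT hlt] with α ⟨hα0, hα1⟩
  refine (lt_VaR_of_lt_tail hX ⟨(le_max_left _ _).trans_lt hα0, hα1⟩ ?_).le
  linarith [le_max_right 0 (1 - tail P X M)]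

theorem VaR_le_mul_of_tail_le (hX : Measurable X) (hY : Measurable Y) (hα : α ∈ Set.Ioo 0 1)
    {t : ℝ} (h : tail P Y (t * VaR P X α) ≤ tail P X (VaR P X α)) :
    VaR P Y α ≤ t * VaR P X α :=
  (VaR_le_iff hY hα).2 (h.trans ((VaR_le_iff hX hα).1 le_rfl))

theorem eventually_VaR_le_mul {ρ c t : ℝ} (hX : Measurable X) (hY : Measurable Y)
    (hRV : RegVary (tail P X) ρ) (hYX : Tendsto (fun x => tail P Y x / tail P X x) atTop (𝓝 c))
    (ht : 0 < t) (hct : c * t ^ ρ < 1) :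
    ∀ᶠ α in 𝓝[<] 1, VaR P Y α ≤ t * VaR P X α := by
  have hXpos := tail_pos_of_regVary hRV
  have hlim : Tendsto (fun x => tail P Y (t * x) / tail P X x) atTop (𝓝 (c * t ^ ρ)) := by
    refine ((hYX.comp (tendsto_id.const_mul_atTop ht)).mul (hRV t ht)).congr fun x => ?_
    simp only [Function.comp_apply, id]
    rw [div_mul_div_cancel₀ (hXpos _).ne']
  have htail : ∀ᶠ x in atTop, tail P Y (t * x) ≤ tail P X x := by
    filter_upwards [hlim.eventually_lt_const hct] with x hx
    exact ((div_lt_one (hXpos x)).1 hx).le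
  filter_upwards [(tendsto_VaR_atTop hX hXpos).eventually htail, Ioo_mem_nhdsLT zero_lt_one]
    with α hα hα01
  exact VaR_le_mul_of_tail_le hX hY hα01 hα

theorem tendsto_VaR_div_VaR_of_tendsto_tail_div {β c : ℝ} (hX : Measurable X)
    (hY : Measurable Y) (hβ : 0 < β) (hc : 0 < c) (hRV : RegVary (tail P X) (-β))
    (hYX : Tendsto (fun x => tail P Y x / tail P X x) atTop (𝓝 c)) :
    Tendsto (fun α => VaR P Y α / VaR P X α) (𝓝[<] 1) (𝓝 (c ^ (1 / β))) := by
  have hXpos := tail_pos_of_regVary hRV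
  have hXY : Tendsto (fun x => tail P X x / tail P Y x) atTop (𝓝 c⁻¹) := by
    simpa only [Pi.inv_apply, inv_div] using hYX.inv₀ hc.ne'
  have hRVY : RegVary (tail P Y) (-β) := hRV.of_tendsto_div hXpos hc.ne' hYX
  set γ := c ^ (1 / β)
  have hγ : 0 < γ := Real.rpow_pos_of_pos hc _
  have hγβ : γ ^ β = c := by
    rw [← Real.rpow_mul hc.le, one_div_mul_cancel hβ.ne', Real.rpow_one]
  have hVaRpos : ∀ᶠ α in 𝓝[<] 1, 0 < VaR P X α :=
    (tendsto_VaR_atTop hX hXpos).eventually_gt_atTop 0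
  refine tendsto_order.2 ⟨fun a ha => ?_, fun b hb => ?_⟩
  · obtain ⟨s, has, hsγ⟩ := exists_between (max_lt ha hγ)
    have hs0 : 0 < s := (le_max_right _ _).trans_lt has
    have hsc : c⁻¹ * s⁻¹ ^ (-β) < 1 := by
      rw [Real.inv_rpow hs0.le, Real.rpow_neg hs0.le, inv_inv, ← hγβ,
        inv_mul_lt_one₀ (by positivity)]
      exact Real.rpow_lt_rpow hs0.le hsγ hβ
    -- the lower bound is the upper bound with the roles of `X` and `Y` exchanged
    filter_upwards [eventually_VaR_le_mul hY hX hRVY hXY (inv_pos.2 hs0) hsc, hVaRpos]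
      with α hα hpos
    rw [lt_div_iff₀ hpos]
    calc a * VaR P X α < s * VaR P X α :=
          mul_lt_mul_of_pos_right ((le_max_left _ _).trans_lt has) hpos
      _ ≤ VaR P Y α := by rwa [← le_inv_mul_iff₀ hs0]
  · obtain ⟨t, hγt, htb⟩ := exists_between hb
    have ht0 := hγ.trans hγt
    have htc : c * t ^ (-β) < 1 := by
      rw [Real.rpow_neg ht0.le, ← div_eq_mul_inv, div_lt_one (by positivity), ← hγβ]
      exact Real.rpow_lt_rpow hγ.le hγt hβ
    filter_upwards [eventually_VaR_le_mul hX hY hRV hYX ht0 htc, hVaRpos] with α hα hpos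
    rw [div_lt_iff₀ hpos]
    calc VaR P Y α ≤ t * VaR P X α := hα
      _ < b * VaR P X α := mul_lt_mul_of_pos_right htb hpos

end TailAndVaR

section SumTail

variable {Ω : Type*} [MeasurableSpace Ω] {P : Measure Ω} [IsProbabilityMeasure P] {L S : Ω → ℝ}

omit [IsProbabilityMeasure P] in
theorem measureReal_inter_tail_eq_mul (hindep : IndepFun L S P) (a b : ℝ) :
    P.real ({ω | a < L ω} ∩ {ω | b < S ω}) = tail P L a * tail P S b := by
  rw [measureReal_def, tail, tail, ← ENNReal.toReal_mul]
  exact congrArg ENNReal.toReal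
    (hindep.measure_inter_preimage_eq_mul _ _ measurableSet_Ioi measurableSet_Ioi)

theorem tail_add_tail_sub_mul_le_tail_add (hS : Measurable S) (hindep : IndepFun L S P)
    (hL0 : ∀ ω, 0 ≤ L ω) (hS0 : ∀ ω, 0 ≤ S ω) (x : ℝ) :
    tail P L x + tail P S x - tail P L x * tail P S x ≤ tail P (fun ω => L ω + S ω) x := by
  have hunion : P.real ({ω | x < L ω} ∪ {ω | x < S ω}) + tail P L x * tail P S x =
      tail P L x + tail P S x := by
    rw [← measureReal_inter_tail_eq_mul hindep]
    exact measureReal_union_add_inter (hS measurableSet_Ioi)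
  have hsub : {ω | x < L ω} ∪ {ω | x < S ω} ⊆ {ω | x < L ω + S ω} := by
    rintro ω (h | h)
    · exact h.trans_le (le_add_of_nonneg_right (hS0 ω))
    · exact h.trans_le (le_add_of_nonneg_left (hL0 ω))
  have hmono : P.real ({ω | x < L ω} ∪ {ω | x < S ω}) ≤ tail P (fun ω => L ω + S ω) x :=
    measureReal_mono hsub
  linarith

theorem tail_add_le (hindep : IndepFun L S P) (a b : ℝ) :
    tail P (fun ω => L ω + S ω) (a + b) ≤ tail P L a + tail P S a + tail P L b * tail P S b := by
  have hsub : {ω | a + b < L ω + S ω} ⊆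
      ({ω | a < L ω} ∪ {ω | a < S ω}) ∪ ({ω | b < L ω} ∩ {ω | b < S ω}) := by
    intro ω (h : a + b < L ω + S ω)
    by_contra hω
    simp only [Set.mem_union, Set.mem_inter_iff, Set.mem_ofPred_eq, not_or, not_and, not_lt] at hω
    obtain ⟨⟨hLa, hSa⟩, hLS⟩ := hω
    rcases le_or_gt (L ω) b with hLb | hLb
    · linarith
    · linarith [hLS hLb]
  calc tail P (fun ω => L ω + S ω) (a + b)
      ≤ P.real (({ω | a < L ω} ∪ {ω | a < S ω}) ∪ ({ω | b < L ω} ∩ {ω | b < S ω})) :=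
        measureReal_mono hsub
    _ ≤ P.real ({ω | a < L ω} ∪ {ω | a < S ω}) + P.real ({ω | b < L ω} ∩ {ω | b < S ω}) :=
        measureReal_union_le _ _
    _ ≤ tail P L a + tail P S a + tail P L b * tail P S b := by
        rw [measureReal_inter_tail_eq_mul hindep]
        gcongr
        exact measureReal_union_le _ _

variable {ρ k : ℝ}

theorem eventually_lt_tail_add_div (hS : Measurable S) (hindep : IndepFun L S P)
    (hL0 : ∀ ω, 0 ≤ L ω) (hS0 : ∀ ω, 0 ≤ S ω) (hRV : RegVary (tail P L) ρ)
    (hk : Tendsto (fun x => tail P S x / tail P L x) atTop (𝓝 k)) {a : ℝ} (ha : a < 1 + k) :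
    ∀ᶠ x in atTop, a < tail P (fun ω => L ω + S ω) x / tail P L x := by
  have hlim : Tendsto (fun x => 1 + tail P S x / tail P L x - tail P S x) atTop (𝓝 (1 + k)) := by
    simpa using (hk.const_add 1).sub (tendsto_tail_atTop (P := P) hS)
  filter_upwards [hlim.eventually_const_lt ha] with x hx
  have hLx := tail_pos_of_regVary hRV x
  refine hx.trans_le ?_
  rw [le_div_iff₀ hLx]
  calc (1 + tail P S x / tail P L x - tail P S x) * tail P L x
      = tail P L x + tail P S x - tail P L x * tail P S x := by field_simp
    _ ≤ _ := tail_add_tail_sub_mul_le_tail_add hS hindep hL0 hS0 x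

theorem eventually_tail_add_div_lt (hS : Measurable S) (hindep : IndepFun L S P)
    (hRV : RegVary (tail P L) ρ) (hk : Tendsto (fun x => tail P S x / tail P L x) atTop (𝓝 k))
    {b c : ℝ} (hc0 : 0 < c) (hc1 : c < 1) (hb : (1 + k) * c ^ ρ < b) :
    ∀ᶠ x in atTop, tail P (fun ω => L ω + S ω) x / tail P L x < b := by
  have hLpos := tail_pos_of_regVary hRV
  have hδ : 0 < 1 - c := sub_pos.2 hc1
  have hlim : Tendsto (fun x => tail P L (c * x) / tail P L x +
      tail P S (c * x) / tail P L (c * x) * (tail P L (c * x) / tail P L x) +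
      tail P L ((1 - c) * x) / tail P L x * tail P S ((1 - c) * x))
      atTop (𝓝 ((1 + k) * c ^ ρ)) := by
    have h := ((hRV c hc0).add ((hk.comp (tendsto_id.const_mul_atTop hc0)).mul (hRV c hc0))).add
      ((hRV (1 - c) hδ).mul
        ((tendsto_tail_atTop (P := P) hS).comp (tendsto_id.const_mul_atTop hδ)))
    rw [mul_zero, add_zero, ← one_add_mul] at h
    exact h
  filter_upwards [hlim.eventually_lt_const hb] with x hx
  refine lt_of_le_of_lt ?_ hx
  have hsplit := tail_add_le hindep (c * x) ((1 - c) * x)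
  rw [← add_mul, add_sub_cancel, one_mul] at hsplit
  rw [div_mul_div_cancel₀ (hLpos _).ne', ← add_div, ← mul_div_right_comm, ← add_div]
  exact div_le_div_of_nonneg_right hsplit (hLpos x).le

theorem tendsto_tail_add_div_tail (hS : Measurable S) (hindep : IndepFun L S P)
    (hL0 : ∀ ω, 0 ≤ L ω) (hS0 : ∀ ω, 0 ≤ S ω) (hRV : RegVary (tail P L) ρ)
    (hk : Tendsto (fun x => tail P S x / tail P L x) atTop (𝓝 k)) :
    Tendsto (fun x => tail P (fun ω => L ω + S ω) x / tail P L x) atTop (𝓝 (1 + k)) := by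
  refine tendsto_order.2 ⟨fun a ha => eventually_lt_tail_add_div hS hindep hL0 hS0 hRV hk ha,
    fun b hb => ?_⟩
  have hcont : Tendsto (fun c : ℝ => (1 + k) * c ^ ρ) (𝓝[<] 1) (𝓝 (1 + k)) := by
    have h := ((Real.continuousAt_rpow_const 1 ρ (Or.inl one_ne_zero)).const_mul
      (1 + k)).tendsto.mono_left (nhdsWithin_le_nhds (s := Set.Iio 1))
    rwa [Real.one_rpow, mul_one] at h
  obtain ⟨c, hcb, hc0, hc1⟩ :=
    ((hcont.eventually_lt_const hb).and (Ioo_mem_nhdsLT zero_lt_one)).exists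
  exact eventually_tail_add_div_lt hS hindep hRV hk hc0 hc1 hcb

end SumTail

theorem stmt8_general {Ω : Type*} [MeasurableSpace Ω] (P : Measure Ω) [IsProbabilityMeasure P]
    (L S : Ω → ℝ) (hL : Measurable L) (hS : Measurable S)
    (hindep : IndepFun L S P)
    (hLpos : ∀ ω, 0 ≤ L ω) (hSpos : ∀ ω, 0 ≤ S ω)
    (β k : ℝ) (hβ : 0 < β)
    (hRVL : RegVary (tail P L) (-β))
    (hk : Tendsto (fun x => tail P S x / tail P L x) atTop (𝓝 k)) :
    Tendsto (fun α => VaR P (fun ω => L ω + S ω) α / ((1 + k) ^ (1 / β) * VaR P L α))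
      (𝓝[<] (1 : ℝ)) (𝓝 1) := by
  have hk0 : 0 ≤ k := ge_of_tendsto' hk fun x => div_nonneg (tail_nonneg x) (tail_nonneg x)
  have hLS : Measurable fun ω => L ω + S ω := hL.add hS
  have hVaR := tendsto_VaR_div_VaR_of_tendsto_tail_div hL hLS hβ (by linarith) hRVL
    (tendsto_tail_add_div_tail hS hindep hLpos hSpos hRVL hk)
  have hγ : (1 + k) ^ (1 / β) ≠ 0 := (Real.rpow_pos_of_pos (by linarith) _).ne'
  simpa only [div_mul_eq_div_div_swap, div_self hγ] using hVaR.div_const ((1 + k) ^ (1 / β))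

theorem stmt8 {Ω : Type*} [MeasurableSpace Ω] (P : Measure Ω) [IsProbabilityMeasure P]
    (L S : Ω → ℝ) (hL : Measurable L) (hS : Measurable S)
    (hindep : IndepFun L S P)
    (hLpos : ∀ ω, 0 ≤ L ω) (hSpos : ∀ ω, 0 ≤ S ω)
    (β k : ℝ) (hβ : 0 < β) (hk0 : 0 ≤ k)
    (hRVL : RegVary (tail P L) (-β)) (hRVS : RegVary (tail P S) (-β))
    (hk : Tendsto (fun x => tail P S x / tail P L x) atTop (𝓝 k)) :
    Tendsto (fun α => VaR P (fun ω => L ω + S ω) α / ((1 + k) ^ (1 / β) * VaR P L α))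
      (𝓝[<] (1 : ℝ)) (𝓝 1) :=
  stmt8_general P L S hL hS hindep hLpos hSpos β k hβ hRVL hk
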